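/- arXiv:2511.08705 — 3 statements merged into one kernel-verified Lean document; each statement's English description precedes it below -/
import Mathlib

section
/- Let G be a finite group and let H_1, …, H_k be core-free subgroups of G. Let x_1, …, x_t be a set of representatives of the conjugacy classes of elements of prime order in G. If Σ_{i=1}^t |x_i^G| · ∏_{j=1}^k fpr(x_i, G/H_j) < 1, then the tuple (H_1, …, H_k) is regular, i.e., there exist g_1, …, g_k ∈ G with ⋂_{j=1}^k H_j^{g_j} = 1. -/
/-- `conjSub H g` is the conjugate subgroup `H ^ g = g⁻¹ H g`. -/
def conjSub {G : Type*} [Group G] (H : Subgroup G) (g : G) : Subgroup G :=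
  Subgroup.comap (MulAut.conj g).toMonoidHom H

/-- The fixed point ratio of `x` in the action of `G` on the coset space `G/H`. -/
noncomputable def fpr (G : Type*) [Group G] (H : Subgroup G) (x : G) : ℝ :=
  (Nat.card (MulAction.fixedBy (G ⧸ H) x) : ℝ) / (Nat.card (G ⧸ H) : ℝ)

/-!
The stabilizer of `ω = (gⱼHⱼ)ⱼ` in `Ω = ∏ⱼ G/Hⱼ` is `⋂ⱼ gⱼHⱼgⱼ⁻¹`. So if the tuple is not
regular, every point of `Ω` is fixed by a nontrivial element, hence by one of prime order,
i.e. by a conjugate of some `xᵢ`. The union bound over these conjugates gives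
`|Ω| ≤ Σᵢ |xᵢ^G| |Fix_Ω(xᵢ)|`, and `|Fix_Ω(xᵢ)| / |Ω| = ∏ⱼ fpr(xᵢ, G/Hⱼ)`.
-/

open MulAction Finset

namespace MulAction

variable {G : Type*} [Group G]

theorem stabilizer_mk_eq_conjSub (H : Subgroup G) (g : G) :
    stabilizer G (g : G ⧸ H) = conjSub H g⁻¹ := by
  ext h
  rw [mem_stabilizer_iff, Quotient.smul_mk, QuotientGroup.eq, ← inv_mem_iff]
  simp [conjSub, mul_assoc]

theorem stabilizer_pi {ι : Type*} {α : ι → Type*} [∀ j, MulAction G (α j)] (ω : ∀ j, α j) :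
    stabilizer G ω = ⨅ j, stabilizer G (ω j) := by
  ext g
  simp [mem_stabilizer_iff, funext_iff, Subgroup.mem_iInf]

theorem stabilizer_pi_quotient {ι : Type*} (H : ι → Subgroup G) (ω : ∀ j, G ⧸ H j) :
    stabilizer G ω = ⨅ j, conjSub (H j) (ω j).out⁻¹ := by
  rw [stabilizer_pi]
  congr! with j
  rw [← stabilizer_mk_eq_conjSub, QuotientGroup.out_eq']

theorem card_fixedBy_eq_of_isConj (α : Type*) [MulAction G α] {a b : G} (h : IsConj a b) :
    Nat.card (fixedBy α a) = Nat.card (fixedBy α b) := by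
  obtain ⟨c, rfl⟩ := isConj_iff.mp h
  rw [← smul_fixedBy, Set.natCard_smul_set]

theorem card_fixedBy_pi {ι : Type*} [Fintype ι] (α : ι → Type*) [∀ j, MulAction G (α j)]
    (g : G) : Nat.card (fixedBy (∀ j, α j) g) = ∏ j, Nat.card (fixedBy (α j) g) := by
  rw [← Nat.card_pi]
  exact Nat.card_congr
    { toFun ω j := ⟨ω.1 j, congrFun ω.2 j⟩
      invFun f := ⟨fun j => f j, funext fun j => (f j).2⟩
      left_inv _ := rfl
      right_inv _ := rfl }

end MulAction

theorem card_le_sum_card_fixedBy {M α ι : Type*} [Monoid M] [MulAction M α] [Finite α]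
    (s : Finset ι) (m : ι → M) (h : ∀ a : α, ∃ i ∈ s, m i • a = a) :
    Nat.card α ≤ ∑ i ∈ s, Nat.card (fixedBy α (m i)) := by
  classical
  have := Fintype.ofFinite α
  calc Nat.card α = #(s.biUnion fun i => (fixedBy α (m i)).toFinset) := by
        rw [Nat.card_eq_fintype_card, ← card_univ]
        congr 1
        ext a
        simpa using h a
    _ ≤ ∑ i ∈ s, #(fixedBy α (m i)).toFinset := card_biUnion_le
    _ = ∑ i ∈ s, Nat.card (fixedBy α (m i)) := by simp

theorem sum_filter_isConj_eq_sum_card_smul {G ι M : Type*} [Group G] [Fintype G] [Fintype ι]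
    [AddCommMonoid M] [DecidableRel (IsConj : G → G → Prop)] (x : ι → G) (f : G → M)
    (hf : ∀ a b, IsConj a b → f a = f b) :
    ∑ p ∈ univ.filter (fun p : ι × G => IsConj (x p.1) p.2), f p.2 =
      ∑ i, Nat.card {y : G // IsConj (x i) y} • f (x i) := by
  rw [sum_filter, Fintype.sum_prod_type]
  refine sum_congr rfl fun i _ => ?_
  dsimp only
  rw [← sum_filter, sum_congr rfl fun y hy => (hf _ _ (mem_filter.mp hy).2).symm, sum_const,
    Nat.card_eq_fintype_card, Fintype.card_subtype]

theorem prod_fpr_eq_card_fixedBy_pi_div {G ι : Type*} [Group G] [Fintype ι]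
    (H : ι → Subgroup G) (x : G) :
    ∏ j, fpr G (H j) x =
      (Nat.card (fixedBy (∀ j, G ⧸ H j) x) : ℝ) / Nat.card (∀ j, G ⧸ H j) := by
  simp only [fpr, card_fixedBy_pi, Nat.card_pi, Nat.cast_prod, prod_div_distrib]

theorem Subgroup.exists_prime_orderOf_mem_of_ne_bot {G : Type*} [Group G] [Finite G]
    {K : Subgroup G} (hK : K ≠ ⊥) : ∃ z ∈ K, (orderOf z).Prime := by
  obtain ⟨p, hp, hpK⟩ := Nat.exists_prime_and_dvd ((Subgroup.one_lt_card_iff_ne_bot K).mpr hK).ne'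
  have := Fact.mk hp
  obtain ⟨z, hz⟩ := exists_prime_orderOf_dvd_card' p hpK
  exact ⟨z, z.2, by rwa [Subgroup.orderOf_coe, hz]⟩

theorem stmt3_general {G : Type*} [Group G] [Fintype G] {k t : ℕ}
    (H : Fin k → Subgroup G)
    (x : Fin t → G)
    (hcover : ∀ g : G, (orderOf g).Prime → ∃ i, IsConj (x i) g)
    (hsum : ∑ i, (Nat.card {y : G // IsConj (x i) y} : ℝ) * ∏ j, fpr G (H j) (x i) < 1) :
    ∃ g : Fin k → G, (⨅ j, conjSub (H j) (g j)) = ⊥ := by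
  classical
  by_contra hreg
  simp only [not_exists] at hreg
  set Ω := ∀ j, G ⧸ H j
  have hfix : ∀ ω : Ω, ∃ p ∈ univ.filter (fun p : Fin t × G => IsConj (x p.1) p.2),
      p.2 • ω = ω := by
    intro ω
    obtain ⟨z, hz, hzp⟩ := Subgroup.exists_prime_orderOf_mem_of_ne_bot
      (K := stabilizer G ω) (by rw [stabilizer_pi_quotient]; exact hreg _)
    obtain ⟨i, hi⟩ := hcover z hzp
    exact ⟨(i, z), by simpa using hi, hz⟩
  have hcount : Nat.card Ω ≤
      ∑ i, Nat.card {y : G // IsConj (x i) y} * Nat.card (fixedBy Ω (x i)) :=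
    (card_le_sum_card_fixedBy _ Prod.snd hfix).trans_eq
      (sum_filter_isConj_eq_sum_card_smul x _ fun _ _ => card_fixedBy_eq_of_isConj Ω)
  have hΩ : (0 : ℝ) < Nat.card Ω := by exact_mod_cast Nat.card_pos
  have hsum_ge_one :
      (1 : ℝ) ≤ ∑ i, (Nat.card {y : G // IsConj (x i) y} : ℝ) * ∏ j, fpr G (H j) (x i) := by
    simp_rw [prod_fpr_eq_card_fixedBy_pi_div, ← mul_div_assoc, ← sum_div]
    rw [le_div_iff₀ hΩ, one_mul]
    exact_mod_cast hcount
  exact hsum.not_ge hsum_ge_one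

/-- If `Σᵢ |xᵢ^G| ∏ⱼ fpr(xᵢ, G/Hⱼ) < 1`, where the `xᵢ` represent the conjugacy
classes of prime order elements of `G`, then the tuple `(H₁, …, H_k)` is regular. -/
theorem stmt3 {G : Type*} [Group G] [Fintype G] {k t : ℕ}
    (H : Fin k → Subgroup G) (hH : ∀ j, (H j).normalCore = ⊥)
    (x : Fin t → G)
    (hprime : ∀ i, (orderOf (x i)).Prime)
    (hdistinct : ∀ i j, IsConj (x i) (x j) → i = j)
    (hcover : ∀ g : G, (orderOf g).Prime → ∃ i, IsConj (x i) g)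
    (hsum : ∑ i, (Nat.card {y : G // IsConj (x i) y} : ℝ) * ∏ j, fpr G (H j) (x i) < 1) :
    ∃ g : Fin k → G, (⨅ j, conjSub (H j) (g j)) = ⊥ :=
  stmt3_general H x hcover hsum
end

section
/- Let G be a finite group and N ⊴ G a normal subgroup. Let x_1, …, x_r be representatives of the G-conjugacy classes of elements of prime order in G, and let y_1, …, y_s be representatives of the N-conjugacy classes of elements of prime order in G (i.e., orbits of N acting by conjugation on the prime-order elements of G). Then for every t ∈ (0, 1], Σ_{i=1}^r |x_i^G|^{−t} ≤ Σ_{j=1}^s |y_j^N|^{−t}. -/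
open Finset in
/-- If `x₁, …, x_r` represent the `G`-classes of prime order elements and
`y₁, …, y_s` represent the `N`-classes of prime order elements (`N ⊴ G`), then
for `t ∈ (0,1]`, `Σᵢ |xᵢ^G|^{-t} ≤ Σⱼ |yⱼ^N|^{-t}`. -/
theorem stmt9 {G : Type*} [Group G] [Fintype G] (N : Subgroup G) [N.Normal]
    {r s : ℕ} (x : Fin r → G) (y : Fin s → G)
    (hx1 : ∀ i, (orderOf (x i)).Prime)
    (hx2 : ∀ i j, IsConj (x i) (x j) → i = j)
    (hx3 : ∀ g : G, (orderOf g).Prime → ∃ i, IsConj (x i) g)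
    (hy1 : ∀ j, (orderOf (y j)).Prime)
    (hy2 : ∀ j j', (∃ n ∈ N, n⁻¹ * y j * n = y j') → j = j')
    (hy3 : ∀ g : G, (orderOf g).Prime → ∃ j, ∃ n ∈ N, n⁻¹ * g * n = y j)
    (t : ℝ) (ht0 : 0 < t) (ht1 : t ≤ 1) :
    ∑ i, (Nat.card {z : G // IsConj (x i) z} : ℝ) ^ (-t) ≤
      ∑ j, (Nat.card {z : G // ∃ n ∈ N, n⁻¹ * y j * n = z} : ℝ) ^ (-t) := by
  classical
  set C : Fin r → Finset G := fun i => univ.filter (fun z => IsConj (x i) z) with hCdef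
  set D : Fin s → Finset G := fun j =>
    univ.filter (fun z => ∃ n ∈ N, n⁻¹ * y j * n = z) with hDdef
  have hmemC : ∀ i z, z ∈ C i ↔ IsConj (x i) z := by
    intro i z; simp [hCdef]
  have hmemD : ∀ j z, z ∈ D j ↔ ∃ n ∈ N, n⁻¹ * y j * n = z := by
    intro j z; simp [hDdef]
  -- N-conjugacy gives conjugacy
  have hNconj : ∀ (a z : G), (∃ n ∈ N, n⁻¹ * a * n = z) → IsConj a z := by
    rintro a z ⟨n, -, rfl⟩
    exact isConj_iff.2 ⟨n⁻¹, by group⟩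
  choose f hfc using fun j => hx3 (y j) (hy1 j)
  -- cardinalities
  have hcard1 : ∀ i, Nat.card {z : G // IsConj (x i) z} = (C i).card := by
    intro i
    rw [Nat.card_eq_fintype_card]
    simp [hCdef, Fintype.card_subtype]
  have hcard2 : ∀ j, Nat.card {z : G // ∃ n ∈ N, n⁻¹ * y j * n = z} = (D j).card := by
    intro j
    rw [Nat.card_eq_fintype_card]
    simp [hDdef, Fintype.card_subtype]
  -- D j ⊆ C (f j)
  have hsub : ∀ j, D j ⊆ C (f j) := by
    intro j z hz
    rw [hmemD] at hz
    exact (hmemC _ _).2 ((hfc j).trans (hNconj _ _ hz))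
  -- C i is the disjoint union of the D j over the fiber of f at i
  have hpart : ∀ i, C i = (univ.filter (fun j => f j = i)).biUnion D := by
    intro i
    ext z
    simp only [mem_biUnion, mem_filter, mem_univ, true_and]
    constructor
    · intro hz
      have hzC := (hmemC i z).1 hz
      have hord : (orderOf z).Prime := by
        obtain ⟨c, hc⟩ := isConj_iff.1 hzC
        have hsc : SemiconjBy c (x i) z := by
          unfold SemiconjBy; rw [← hc]; group
        rw [← hsc.orderOf_eq]
        exact hx1 i
      obtain ⟨j, n, hn, hnz⟩ := hy3 z hord
      have hzDj : z ∈ D j := by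
        rw [hmemD]
        exact ⟨n⁻¹, inv_mem hn, by rw [← hnz]; group⟩
      refine ⟨j, ?_, hzDj⟩
      have : IsConj (x (f j)) (x i) :=
        ((hfc j).trans (hNconj _ _ ((hmemD j z).1 hzDj))).trans hzC.symm
      exact hx2 _ _ this
    · rintro ⟨j, rfl, hzD⟩
      exact hsub j hzD
  have hdisj : ∀ i, ∀ j ∈ univ.filter (fun j => f j = i), ∀ j' ∈ univ.filter (fun j => f j = i),
      j ≠ j' → Disjoint (D j) (D j') := by
    intro i j _ j' _ hne
    rw [Finset.disjoint_left]
    intro z hz hz'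
    obtain ⟨n, hn, hnz⟩ := (hmemD j z).1 hz
    obtain ⟨m, hm, hmz⟩ := (hmemD j' z).1 hz'
    refine hne (hy2 j j' ⟨n * m⁻¹, mul_mem hn (inv_mem hm), ?_⟩)
    have hzz : y j' = m * (n⁻¹ * y j * n) * m⁻¹ := by
      rw [hnz, ← hmz]; group
    rw [hzz]; group
  -- nonemptiness facts
  have hCpos : ∀ i, 0 < (C i).card := by
    intro i
    exact card_pos.2 ⟨x i, (hmemC i (x i)).2 (IsConj.refl _)⟩
  have hDpos : ∀ j, 0 < (D j).card := by
    intro j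
    exact card_pos.2 ⟨y j, (hmemD j (y j)).2 ⟨1, one_mem N, by group⟩⟩
  -- main estimate per fiber
  have key : ∀ i, ((C i).card : ℝ) ^ (-t) ≤
      ∑ j ∈ univ.filter (fun j => f j = i), ((D j).card : ℝ) ^ (-t) := by
    intro i
    have hmpos : (0:ℝ) < ((C i).card : ℝ) := by exact_mod_cast hCpos i
    have hrw : ∀ a : ℝ, 0 < a → a * a ^ (-(1+t)) = a ^ (-t) := by
      intro a ha
      rw [show (-t) = 1 + (-(1+t)) by ring, Real.rpow_add ha, Real.rpow_one]
    have hsum : ∑ j ∈ univ.filter (fun j => f j = i), ((D j).card : ℝ)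
        = ((C i).card : ℝ) := by
      rw [hpart i, card_biUnion (hdisj i)]
      push_cast
      rfl
    have step : ∀ j ∈ univ.filter (fun j => f j = i),
        ((D j).card : ℝ) * ((C i).card : ℝ) ^ (-(1+t)) ≤ ((D j).card : ℝ) ^ (-t) := by
      intro j hj
      have hjpos : (0:ℝ) < ((D j).card : ℝ) := by exact_mod_cast hDpos j
      have hle : ((D j).card : ℝ) ≤ ((C i).card : ℝ) := by
        have : f j = i := (mem_filter.1 hj).2
        exact_mod_cast card_le_card (this ▸ hsub j)
      have h1 : ((C i).card : ℝ) ^ (-(1+t)) ≤ ((D j).card : ℝ) ^ (-(1+t)) :=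
        Real.rpow_le_rpow_of_nonpos hjpos hle (by linarith)
      calc ((D j).card : ℝ) * ((C i).card : ℝ) ^ (-(1+t))
          ≤ ((D j).card : ℝ) * ((D j).card : ℝ) ^ (-(1+t)) :=
            mul_le_mul_of_nonneg_left h1 hjpos.le
        _ = ((D j).card : ℝ) ^ (-t) := hrw _ hjpos
    calc ((C i).card : ℝ) ^ (-t)
        = ((C i).card : ℝ) * ((C i).card : ℝ) ^ (-(1+t)) := (hrw _ hmpos).symm
      _ = ∑ j ∈ univ.filter (fun j => f j = i),
            ((D j).card : ℝ) * ((C i).card : ℝ) ^ (-(1+t)) := by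
          rw [← sum_mul, hsum]
      _ ≤ _ := sum_le_sum step
  calc ∑ i, (Nat.card {z : G // IsConj (x i) z} : ℝ) ^ (-t)
      = ∑ i, ((C i).card : ℝ) ^ (-t) := by simp_rw [hcard1]
    _ ≤ ∑ i, ∑ j ∈ univ.filter (fun j => f j = i), ((D j).card : ℝ) ^ (-t) :=
        sum_le_sum fun i _ => key i
    _ = ∑ j, ((D j).card : ℝ) ^ (-t) :=
        sum_fiberwise_of_maps_to (fun j _ => mem_univ (f j)) _
    _ = _ := by simp_rw [hcard2]
end

section
/- Let G be a finite group, N ⊴ G a normal subgroup, and H_1, …, H_k core-free subgroups of G. Suppose m > 0 is a real number such that fpr(x, G/H_j) < |x^N|^{−m} for every element x ∈ G of prime order and every j ∈ {1, …, k}, and suppose that Σ_{i=1}^s |y_i^N|^{−(km−1)} < 1, where y_1, …, y_s are representatives of the N-conjugacy classes of prime-order elements of G. Then the tuple (H_1, …, H_k) is regular: there exist g_1, …, g_k ∈ G with ⋂_{j=1}^k H_j^{g_j} = 1. -/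
/-!
Choose `g ∈ Gᵏ` uniformly at random. For fixed `x`, the proportion of `a ∈ G` with
`x ∈ H ^ a` is `fpr(x, G/H)`, so `x` lies in `⋂ⱼ Hⱼ ^ gⱼ` with probability `∏ⱼ fpr(x, G/Hⱼ)`.
A nontrivial intersection contains an element of prime order, hence a union bound over such
elements shows that the intersection is trivial for some `g` as soon as
`∑ₓ ∏ⱼ fpr(x, G/Hⱼ) < 1`. The hypotheses bound this sum: each term is at most `|x^N|^{-km}`,
and grouping the prime order elements into their `N`-classes turns the sum of these bounds
into `∑ᵢ |yᵢ^N|^{1-km}`.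
-/

open Finset

theorem Finset.sum_biUnion_le_sum_sum {ι α M : Type*} [DecidableEq α] [AddCommMonoid M]
    [PartialOrder M] [IsOrderedAddMonoid M] (s : Finset ι) (t : ι → Finset α) {f : α → M}
    (hf : ∀ a, 0 ≤ f a) :
    ∑ a ∈ s.biUnion t, f a ≤ ∑ i ∈ s, ∑ a ∈ t i, f a := by
  classical
  induction s using Finset.induction_on with
  | empty => simp
  | insert i s hi ih =>
    rw [biUnion_insert, sum_insert hi]
    calc ∑ a ∈ t i ∪ s.biUnion t, f a
        ≤ ∑ a ∈ t i ∪ s.biUnion t, f a + ∑ a ∈ t i ∩ s.biUnion t, f a :=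
          le_add_of_nonneg_right (sum_nonneg fun a _ => hf a)
      _ = ∑ a ∈ t i, f a + ∑ a ∈ s.biUnion t, f a := sum_union_inter
      _ ≤ ∑ a ∈ t i, f a + ∑ j ∈ s, ∑ a ∈ t j, f a := by gcongr

section

variable {G : Type*} [Group G]

theorem exists_prime_orderOf_mem [Finite G] {K : Subgroup G} (hK : K ≠ ⊥) :
    ∃ z ∈ K, (orderOf z).Prime := by
  obtain ⟨x, hxK, hx1⟩ := K.bot_or_exists_ne_one.resolve_left hK
  have hp : (orderOf x).minFac.Prime := Nat.minFac_prime (by simpa using hx1)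
  refine ⟨x ^ (orderOf x / (orderOf x).minFac), K.pow_mem hxK _, ?_⟩
  rwa [orderOf_pow_orderOf_div (orderOf_pos x).ne' (Nat.minFac_dvd _)]

/-- `x ∈ H ^ a` exactly when `a⁻¹` lies in a coset fixed by `x`, and each fixed coset
contributes `|H|` such `a`. -/
theorem card_mem_conjSub_eq_fpr_mul_card [Finite G] (H : Subgroup G) (x : G) :
    (Nat.card {a : G // x ∈ conjSub H a} : ℝ) = fpr G H x * Nat.card G := by
  have e : {a : G // x ∈ conjSub H a} ≃
      (QuotientGroup.mk ⁻¹' (MulAction.fixedBy (G ⧸ H) x) : Set G) := by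
    refine (Equiv.inv G).subtypeEquiv fun a => ?_
    rw [Equiv.inv_apply, Set.mem_preimage, MulAction.mem_fixedBy, MulAction.Quotient.smul_mk,
      QuotientGroup.eq, smul_eq_mul, show (x * a⁻¹)⁻¹ * a⁻¹ = (a * x * a⁻¹)⁻¹ by group,
      H.inv_mem_iff]
    rfl
  have hQ : (Nat.card (G ⧸ H) : ℝ) ≠ 0 := Nat.cast_ne_zero.2 Nat.card_pos.ne'
  rw [Nat.card_congr (e.trans (QuotientGroup.preimageMkEquivSubgroupProdSet H _)), Nat.card_prod,
    fpr, H.card_eq_card_quotient_mul_card_subgroup]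
  push_cast
  field_simp

theorem exists_forall_notMem_iInf_conjSub [Finite G] {ι : Type*} [Fintype ι]
    (H : ι → Subgroup G) (P : Finset G) (hP : ∑ x ∈ P, ∏ j, fpr G (H j) x < 1) :
    ∃ g : ι → G, ∀ x ∈ P, x ∉ ⨅ j, conjSub (H j) (g j) := by
  classical
  have := Fintype.ofFinite G
  by_contra! hcover
  set A : G → ι → Finset G := fun x j => univ.filter fun a => x ∈ conjSub (H j) a
  have hsub : (univ : Finset (ι → G)) ⊆ P.biUnion fun x => Fintype.piFinset (A x) := by
    intro g _
    obtain ⟨x, hxP, hx⟩ := hcover g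
    exact mem_biUnion.2 ⟨x, hxP, Fintype.mem_piFinset.2 fun j =>
      mem_filter.2 ⟨mem_univ _, Subgroup.mem_iInf.1 hx j⟩⟩
  have hA : ∀ x j, ((A x j).card : ℝ) = fpr G (H j) x * Fintype.card G := fun x j => by
    rw [← Fintype.card_subtype, ← Nat.card_eq_fintype_card, ← Nat.card_eq_fintype_card,
      card_mem_conjSub_eq_fpr_mul_card]
  have hcount : (Fintype.card G : ℝ) ^ Fintype.card ι ≤
      (∑ x ∈ P, ∏ j, fpr G (H j) x) * (Fintype.card G : ℝ) ^ Fintype.card ι := by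
    have hnat := (card_le_card hsub).trans card_biUnion_le
    rw [card_univ, Fintype.card_fun] at hnat
    calc (Fintype.card G : ℝ) ^ Fintype.card ι
        ≤ ∑ x ∈ P, ∏ j, ((A x j).card : ℝ) := by exact_mod_cast hnat.trans_eq (by simp)
      _ = _ := by simp only [hA, prod_mul_distrib, prod_const, card_univ, sum_mul]
  have hpos : (0 : ℝ) < (Fintype.card G : ℝ) ^ Fintype.card ι := by positivity
  exact hcount.not_gt ((mul_lt_iff_lt_one_left hpos).2 hP)

section ConjugacyClasses

/-- The `N`-conjugacy class `x^N`. -/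
def conjClassBy (N : Subgroup G) (x : G) : Set G := {z | ∃ n ∈ N, n⁻¹ * x * n = z}

variable {N : Subgroup G}

theorem mem_conjClassBy_self (x : G) : x ∈ conjClassBy N x := ⟨1, N.one_mem, by group⟩

theorem conjClassBy_eq_of_mem {x z : G} (h : z ∈ conjClassBy N x) :
    conjClassBy N z = conjClassBy N x := by
  obtain ⟨n, hn, rfl⟩ := h
  ext w
  constructor
  · rintro ⟨n', hn', rfl⟩
    exact ⟨n * n', N.mul_mem hn hn', by group⟩
  · rintro ⟨n', hn', rfl⟩
    exact ⟨n⁻¹ * n', N.mul_mem (N.inv_mem hn) hn', by group⟩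

theorem mem_conjClassBy_comm {x z : G} (h : z ∈ conjClassBy N x) : x ∈ conjClassBy N z :=
  conjClassBy_eq_of_mem h ▸ mem_conjClassBy_self x

/-- Each `N`-class `y^N` carries total weight `|y^N| · |y^N|^{-r}`. -/
theorem sum_rpow_card_conjClassBy_le [Finite G] {ι : Type*} [Fintype ι] (y : ι → G)
    (P : Finset G) (hP : ∀ x ∈ P, ∃ i, y i ∈ conjClassBy N x) (r : ℝ) :
    ∑ x ∈ P, (Nat.card (conjClassBy N x) : ℝ) ^ (-r)
      ≤ ∑ i, (Nat.card (conjClassBy N (y i)) : ℝ) ^ (-(r - 1)) := by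
  classical
  have := Fintype.ofFinite G
  set c : G → ℝ := fun x => Nat.card (conjClassBy N x)
  set C : ι → Finset G := fun i => (conjClassBy N (y i)).toFinset
  have hsub : P ⊆ univ.biUnion C := fun x hx => by
    obtain ⟨i, hi⟩ := hP x hx
    exact mem_biUnion.2 ⟨i, mem_univ _, Set.mem_toFinset.2 (mem_conjClassBy_comm hi)⟩
  have hclass : ∀ i, ∑ z ∈ C i, c z ^ (-r) = c (y i) ^ (-(r - 1)) := fun i => by
    have hconst : ∀ z ∈ C i, c z ^ (-r) = c (y i) ^ (-r) := fun z hz => by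
      simp only [c, conjClassBy_eq_of_mem (Set.mem_toFinset.1 hz)]
    have hcard : ((C i).card : ℝ) = c (y i) := by
      simp only [C, c, Nat.card_eq_card_toFinset]
    have hc : c (y i) ≠ 0 := Nat.cast_ne_zero.2
      (Nat.card_pos_iff.2 ⟨⟨_, mem_conjClassBy_self (y i)⟩, Set.toFinite _⟩).ne'
    rw [sum_congr rfl hconst, sum_const, nsmul_eq_mul, hcard, show -(r - 1) = -r + 1 by ring,
      Real.rpow_add_one hc, mul_comm]
  calc ∑ x ∈ P, c x ^ (-r)
      ≤ ∑ x ∈ univ.biUnion C, c x ^ (-r) :=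
        sum_le_sum_of_subset_of_nonneg hsub fun _ _ _ => by positivity
    _ ≤ ∑ i, ∑ z ∈ C i, c z ^ (-r) := sum_biUnion_le_sum_sum _ _ fun _ => by positivity
    _ = _ := sum_congr rfl fun i _ => hclass i

end ConjugacyClasses

theorem prod_fpr_le_rpow {k : ℕ} (H : Fin k → Subgroup G) (x : G) {c m : ℝ} (hc : 0 ≤ c)
    (h : ∀ j, fpr G (H j) x ≤ c ^ (-m)) :
    ∏ j, fpr G (H j) x ≤ c ^ (-(k * m)) := by
  calc ∏ j, fpr G (H j) x ≤ ∏ _j : Fin k, c ^ (-m) :=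
        prod_le_prod (fun j _ => by unfold fpr; positivity) fun j _ => h j
    _ = c ^ (-(k * m)) := by
        rw [prod_const, card_univ, Fintype.card_fin, ← Real.rpow_mul_natCast hc]
        ring_nf

end

theorem stmt19_general {G : Type*} [Group G] [Fintype G] (N : Subgroup G)
    {k s : ℕ} (H : Fin k → Subgroup G)
    (m : ℝ)
    (hfpr : ∀ x : G, (orderOf x).Prime → ∀ j,
      fpr G (H j) x < (Nat.card {z : G // ∃ n ∈ N, n⁻¹ * x * n = z} : ℝ) ^ (-m))
    (y : Fin s → G)
    (hy3 : ∀ g : G, (orderOf g).Prime → ∃ i, ∃ n ∈ N, n⁻¹ * g * n = y i)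
    (hsum : ∑ i, (Nat.card {z : G // ∃ n ∈ N, n⁻¹ * y i * n = z} : ℝ) ^
        (-((k : ℝ) * m - 1)) < 1) :
    ∃ g : Fin k → G, (⨅ j, conjSub (H j) (g j)) = ⊥ := by
  classical
  set P : Finset G := univ.filter fun x => (orderOf x).Prime
  have hP : ∑ x ∈ P, ∏ j, fpr G (H j) x < 1 :=
    calc ∑ x ∈ P, ∏ j, fpr G (H j) x
        ≤ ∑ x ∈ P, (Nat.card (conjClassBy N x) : ℝ) ^ (-(k * m)) :=
          sum_le_sum fun x hx => prod_fpr_le_rpow H x (Nat.cast_nonneg _)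
            fun j => (hfpr x (mem_filter.1 hx).2 j).le
      _ ≤ ∑ i, (Nat.card (conjClassBy N (y i)) : ℝ) ^ (-(k * m - 1)) :=
          sum_rpow_card_conjClassBy_le y P (fun x hx => hy3 x (mem_filter.1 hx).2) _
      _ < 1 := hsum
  obtain ⟨g, hg⟩ := exists_forall_notMem_iInf_conjSub H P hP
  refine ⟨g, by_contra fun hne => ?_⟩
  obtain ⟨z, hz, hzp⟩ := exists_prime_orderOf_mem hne
  exact hg z (mem_filter.2 ⟨mem_univ _, hzp⟩) hz

/-- If `fpr(x, G/Hⱼ) < |x^N|^{-m}` for all prime order `x ∈ G` and all `j`, and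
`Σᵢ |yᵢ^N|^{-(km-1)} < 1` over representatives `yᵢ` of the `N`-classes of prime
order elements, then the tuple `(H₁, …, H_k)` is regular. -/
theorem stmt19 {G : Type*} [Group G] [Fintype G] (N : Subgroup G) [N.Normal]
    {k s : ℕ} (H : Fin k → Subgroup G) (hH : ∀ j, (H j).normalCore = ⊥)
    (m : ℝ) (hm : 0 < m)
    (hfpr : ∀ x : G, (orderOf x).Prime → ∀ j,
      fpr G (H j) x < (Nat.card {z : G // ∃ n ∈ N, n⁻¹ * x * n = z} : ℝ) ^ (-m))
    (y : Fin s → G)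
    (hy1 : ∀ i, (orderOf (y i)).Prime)
    (hy2 : ∀ i i', (∃ n ∈ N, n⁻¹ * y i * n = y i') → i = i')
    (hy3 : ∀ g : G, (orderOf g).Prime → ∃ i, ∃ n ∈ N, n⁻¹ * g * n = y i)
    (hsum : ∑ i, (Nat.card {z : G // ∃ n ∈ N, n⁻¹ * y i * n = z} : ℝ) ^
        (-((k : ℝ) * m - 1)) < 1) :
    ∃ g : Fin k → G, (⨅ j, conjSub (H j) (g j)) = ⊥ :=
  stmt19_general N H m hfpr y hy3 hsum
end
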